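/- arXiv:1505.01042 — 3 statements merged into one kernel-verified Lean document; each statement's English description precedes it below -/
import Mathlib

section
/- Let α ∈ (-1,1), R > 2, and let j ≥ 1 be an integer. Then ∑_{l=1}^∞ 2·|∑_{k=1}^∞ (-α)^k C(2l+2j-1,2j-1)/(kR)^{2l+2j}| ≤ ∑_{k=1}^∞ |α|^k ( (kR-1)^{-2j} + (kR+1)^{-2j} - 2(kR)^{-2j} ) < 1. -/
private lemma hasSum_congr_fun' {f g : ℕ → ℝ} {a : ℝ} (hf : HasSum f a)
    (h : ∀ n, f n = g n) : HasSum g a := by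
  rwa [(funext h : f = g)] at hf

/-- Key binomial-series identity in `HasSum` form. -/
private lemma key_hasSum (m : ℕ) (hm : 1 ≤ m) (x : ℝ) (hx : |x| < 1) :
    HasSum (fun l : ℕ => 2 * ((Nat.choose (2 * (l + 1) + m - 1) (m - 1) : ℕ) : ℝ)
        * x ^ (2 * (l + 1) + m))
      ((1 / (1 - x) ^ m + 1 / (1 + x) ^ m - 2) * x ^ m) := by
  have hx' : ‖x‖ < 1 := by rwa [Real.norm_eq_abs]
  have hx'' : ‖-x‖ < 1 := by rwa [norm_neg]
  have h1 := hasSum_choose_mul_geometric_of_norm_lt_one (𝕜 := ℝ) (m - 1) hx'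
  have h2 := hasSum_choose_mul_geometric_of_norm_lt_one (𝕜 := ℝ) (m - 1) hx''
  rw [Nat.sub_add_cancel hm] at h1 h2
  rw [sub_neg_eq_add] at h2
  have h3 := h1.add h2
  have hinj : Function.Injective (fun l : ℕ => 2 * l) := fun a b hab => by dsimp only at hab; omega
  have hsupp : ∀ n ∉ Set.range (fun l : ℕ => 2 * l),
      (((n + (m - 1)).choose (m - 1) : ℕ) : ℝ) * x ^ n
        + (((n + (m - 1)).choose (m - 1) : ℕ) : ℝ) * (-x) ^ n = 0 := by
    intro n hn
    have hodd : Odd n := by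
      rcases Nat.even_or_odd n with he | ho
      · obtain ⟨r, hr⟩ := he
        exact absurd ⟨r, by dsimp only; omega⟩ hn
      · exact ho
    rw [hodd.neg_pow]; ring
  have h4' := (hinj.hasSum_iff hsupp).2 h3
  have h4 : HasSum (fun l : ℕ => 2 * (((2 * l + m - 1).choose (m - 1) : ℕ) : ℝ) * x ^ (2 * l))
      (1 / (1 - x) ^ m + 1 / (1 + x) ^ m) := by
    refine hasSum_congr_fun' h4' fun l => ?_
    have hev : Even (2 * l) := even_two_mul l
    simp only [Function.comp_apply]
    rw [hev.neg_pow, (by omega : 2 * l + (m - 1) = 2 * l + m - 1)]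
    ring
  have h5 : HasSum (fun l : ℕ =>
      2 * (((2 * (l + 1) + m - 1).choose (m - 1) : ℕ) : ℝ) * x ^ (2 * (l + 1)))
      ((1 / (1 - x) ^ m + 1 / (1 + x) ^ m) - 2) := by
    have h5' := (hasSum_nat_add_iff'
      (f := fun l : ℕ => 2 * (((2 * l + m - 1).choose (m - 1) : ℕ) : ℝ) * x ^ (2 * l)) 1).2 h4
    have hsum1 : (∑ i ∈ Finset.range 1,
        2 * (((2 * i + m - 1).choose (m - 1) : ℕ) : ℝ) * x ^ (2 * i)) = 2 := by
      rw [Finset.sum_range_one]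
      norm_num [(by omega : 2 * 0 + m - 1 = m - 1), Nat.choose_self]
    rw [hsum1] at h5'
    exact hasSum_congr_fun' h5' fun l => rfl
  refine hasSum_congr_fun' (h5.mul_right (x ^ m)) fun l => ?_
  rw [pow_add]; ring

/-- Evaluation of the series as a closed-form expression. -/
private lemma key_tsum (j : ℕ) (hj : 1 ≤ j) (b : ℝ) (hb : 2 < b) :
    ∑' l : ℕ, 2 * ((Nat.choose (2 * (l + 1) + 2 * j - 1) (2 * j - 1) : ℕ) : ℝ)
        * (b⁻¹) ^ (2 * (l + 1) + 2 * j)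
      = (b - 1)⁻¹ ^ (2 * j) + (b + 1)⁻¹ ^ (2 * j) - 2 * (b⁻¹) ^ (2 * j) := by
  have hm : 1 ≤ 2 * j := by omega
  have hb0 : (0:ℝ) < b := by linarith
  have hx : |b⁻¹| < 1 := by
    rw [abs_of_pos (inv_pos.2 hb0)]
    rw [inv_lt_one_iff₀]
    right; linarith
  rw [(key_hasSum (2 * j) hm b⁻¹ hx).tsum_eq]
  have hb1 : b - 1 ≠ 0 := by linarith
  have hb2 : b + 1 ≠ 0 := by linarith
  have hbne : b ≠ 0 := ne_of_gt hb0
  have E1 : (1 / (1 - b⁻¹) ^ (2 * j)) * b⁻¹ ^ (2 * j) = (b - 1)⁻¹ ^ (2 * j) := by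
    rw [one_div, ← inv_pow, ← mul_pow]
    rw [← mul_inv]
    congr 1
    rw [sub_mul, one_mul, inv_mul_cancel₀ hbne]
  have E2 : (1 / (1 + b⁻¹) ^ (2 * j)) * b⁻¹ ^ (2 * j) = (b + 1)⁻¹ ^ (2 * j) := by
    rw [one_div, ← inv_pow, ← mul_pow, ← mul_inv]
    congr 1
    rw [add_mul, one_mul, inv_mul_cancel₀ hbne]
  rw [sub_mul, add_mul, E1, E2]

private lemma conv_ineq (j : ℕ) (a : ℝ) (ha : 1 < a) :
    2 * (a⁻¹) ^ (2 * j) ≤ (a - 1)⁻¹ ^ (2 * j) + (a + 1)⁻¹ ^ (2 * j) := by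
  have h0 : (0:ℝ) < a - 1 := by linarith
  have h1 : (0:ℝ) < a + 1 := by linarith
  have ha0 : (0:ℝ) < a := by linarith
  have huv : (a⁻¹) ^ (2 * j) ≤ (a - 1)⁻¹ ^ j * (a + 1)⁻¹ ^ j := by
    have hprod : (a - 1)⁻¹ ^ j * (a + 1)⁻¹ ^ j = (((a - 1) * (a + 1))⁻¹) ^ j := by
      rw [mul_inv, mul_pow]
    have heq : (a⁻¹) ^ (2 * j) = ((a ^ 2)⁻¹) ^ j := by
      rw [pow_mul, inv_pow]
    rw [hprod, heq]
    apply pow_le_pow_left₀ (by positivity)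
    apply inv_anti₀ (by nlinarith) (by nlinarith)
  have hsq : 2 * ((a - 1)⁻¹ ^ j * (a + 1)⁻¹ ^ j)
      ≤ ((a - 1)⁻¹ ^ j) ^ 2 + ((a + 1)⁻¹ ^ j) ^ 2 := by
    nlinarith [sq_nonneg ((a - 1)⁻¹ ^ j - (a + 1)⁻¹ ^ j)]
  have e3 : ((a - 1)⁻¹ ^ j) ^ 2 = (a - 1)⁻¹ ^ (2 * j) := by
    rw [← pow_mul, mul_comm]
  have e4 : ((a + 1)⁻¹ ^ j) ^ 2 = (a + 1)⁻¹ ^ (2 * j) := by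
    rw [← pow_mul, mul_comm]
  linarith

set_option maxHeartbeats 1000000 in
/-- For `α ∈ (-1,1)`, `R > 2`, and integer `j ≥ 1`:
`∑_{l=1}^∞ 2|∑_{k=1}^∞ (-α)^k C(2l+2j-1,2j-1)/(kR)^{2l+2j}|
  ≤ ∑_{k=1}^∞ |α|^k ((kR-1)^{-2j} + (kR+1)^{-2j} - 2(kR)^{-2j}) < 1`. -/
theorem stmt_7 (α R : ℝ) (hα : |α| < 1) (hR : 2 < R) (j : ℕ) (hj : 1 ≤ j) :
    (∑' l : ℕ, 2 * |∑' k : ℕ, (-α) ^ (k + 1) *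
        (Nat.choose (2 * (l + 1) + 2 * j - 1) (2 * j - 1) : ℝ) /
          ((((k : ℝ) + 1) * R) ^ (2 * (l + 1) + 2 * j))|)
      ≤ (∑' k : ℕ, |α| ^ (k + 1) *
          ((((k : ℝ) + 1) * R - 1)⁻¹ ^ (2 * j) + (((k : ℝ) + 1) * R + 1)⁻¹ ^ (2 * j) -
            2 * ((((k : ℝ) + 1) * R)⁻¹) ^ (2 * j))) ∧
    (∑' k : ℕ, |α| ^ (k + 1) *
        ((((k : ℝ) + 1) * R - 1)⁻¹ ^ (2 * j) + (((k : ℝ) + 1) * R + 1)⁻¹ ^ (2 * j) -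
          2 * ((((k : ℝ) + 1) * R)⁻¹) ^ (2 * j))) < 1 := by
  have hR0 : (0:ℝ) < R := by linarith
  have hα0 : (0:ℝ) ≤ |α| := abs_nonneg α
  have hbR : ∀ k : ℕ, R ≤ ((k:ℝ) + 1) * R := by
    intro k
    nlinarith [Nat.cast_nonneg (α := ℝ) k]
  have hb2 : ∀ k : ℕ, 2 < ((k:ℝ) + 1) * R := fun k => lt_of_lt_of_le hR (hbR k)
  have hbpos : ∀ k : ℕ, 0 < ((k:ℝ) + 1) * R := fun k => by linarith [hb2 k]
  have hs0 : ∀ k : ℕ, 0 ≤ ((((k:ℝ) + 1) * R - 1)⁻¹ ^ (2 * j) + (((k:ℝ) + 1) * R + 1)⁻¹ ^ (2 * j)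
      - 2 * (((((k:ℝ) + 1) * R)⁻¹)) ^ (2 * j)) := by
    intro k
    have := conv_ineq j (((k:ℝ) + 1) * R) (by linarith [hb2 k])
    linarith
  constructor
  · -- first inequality
    have hG : Summable (fun l : ℕ =>
        2 * (((2 * (l + 1) + 2 * j - 1).choose (2 * j - 1) : ℕ) : ℝ)
          * (R⁻¹) ^ (2 * (l + 1) + 2 * j)) := by
      refine (key_hasSum (2 * j) (by omega) R⁻¹ ?_).summable
      rw [abs_of_pos (by positivity), inv_lt_one_iff₀]
      right; linarith
    have hH : Summable (fun k : ℕ => |α| ^ (k + 1)) := by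
      have h := summable_geometric_of_lt_one hα0 hα
      exact (h.mul_left |α|).congr fun k => by rw [← pow_succ']
    have hFG : ∀ l k : ℕ,
        2 * (|α| ^ (k + 1) * (((2 * (l + 1) + 2 * j - 1).choose (2 * j - 1) : ℕ) : ℝ)
          / ((((k:ℝ) + 1) * R) ^ (2 * (l + 1) + 2 * j)))
        ≤ (2 * (((2 * (l + 1) + 2 * j - 1).choose (2 * j - 1) : ℕ) : ℝ)
            * (R⁻¹) ^ (2 * (l + 1) + 2 * j)) * (|α| ^ (k + 1)) := by
      intro l k
      have h1 : ((((k:ℝ) + 1) * R)⁻¹) ≤ R⁻¹ := inv_anti₀ hR0 (hbR k)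
      have h2 : ((((k:ℝ) + 1) * R)⁻¹) ^ (2 * (l + 1) + 2 * j)
          ≤ (R⁻¹) ^ (2 * (l + 1) + 2 * j) :=
        pow_le_pow_left₀ (by positivity) h1 _
      have hc0 : (0:ℝ) ≤ (((2 * (l + 1) + 2 * j - 1).choose (2 * j - 1) : ℕ) : ℝ) :=
        Nat.cast_nonneg _
      have ha0' : (0:ℝ) ≤ |α| ^ (k + 1) := by positivity
      rw [div_eq_mul_inv, ← inv_pow]
      nlinarith [mul_nonneg (mul_nonneg ha0' hc0) (sub_nonneg.2 h2)]
    have hFnn : (0 : ℕ × ℕ → ℝ) ≤ Function.uncurry fun (l k : ℕ) =>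
        2 * (|α| ^ (k + 1) * (((2 * (l + 1) + 2 * j - 1).choose (2 * j - 1) : ℕ) : ℝ)
          / ((((k:ℝ) + 1) * R) ^ (2 * (l + 1) + 2 * j))) := by
      intro q
      have : (0:ℝ) < (((q.2:ℝ) + 1) * R) ^ (2 * (q.1 + 1) + 2 * j) :=
        pow_pos (hbpos q.2) _
      simp only [Function.uncurry, Pi.zero_apply]
      positivity
    have hF : Summable (Function.uncurry fun (l k : ℕ) =>
        2 * (|α| ^ (k + 1) * (((2 * (l + 1) + 2 * j - 1).choose (2 * j - 1) : ℕ) : ℝ)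
          / ((((k:ℝ) + 1) * R) ^ (2 * (l + 1) + 2 * j)))) := by
      refine Summable.of_nonneg_of_le (f := fun q : ℕ × ℕ =>
          (2 * (((2 * (q.1 + 1) + 2 * j - 1).choose (2 * j - 1) : ℕ) : ℝ)
            * (R⁻¹) ^ (2 * (q.1 + 1) + 2 * j)) * (|α| ^ (q.2 + 1)))
        (fun q => hFnn q) (fun q => hFG q.1 q.2) ?_
      exact hG.mul_of_nonneg hH
        (fun l => mul_nonneg (mul_nonneg (by norm_num) (Nat.cast_nonneg _))
          (pow_nonneg (inv_nonneg.2 hR0.le) _))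
        (fun k => by positivity)
    obtain ⟨hrows, hsums⟩ := (summable_prod_of_nonneg hFnn).1 hF
    have habs : ∀ l k : ℕ,
        |(-α) ^ (k + 1) * (((2 * (l + 1) + 2 * j - 1).choose (2 * j - 1) : ℕ) : ℝ)
          / ((((k:ℝ) + 1) * R) ^ (2 * (l + 1) + 2 * j))|
        = |α| ^ (k + 1) * (((2 * (l + 1) + 2 * j - 1).choose (2 * j - 1) : ℕ) : ℝ)
          / ((((k:ℝ) + 1) * R) ^ (2 * (l + 1) + 2 * j)) := by
      intro l k
      rw [abs_div, abs_mul, abs_pow, abs_neg, Nat.abs_cast, abs_pow,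
        abs_of_pos (hbpos k)]
    have hstep : ∀ l : ℕ,
        2 * |∑' k : ℕ, (-α) ^ (k + 1) *
            (((2 * (l + 1) + 2 * j - 1).choose (2 * j - 1) : ℕ) : ℝ)
          / ((((k:ℝ) + 1) * R) ^ (2 * (l + 1) + 2 * j))|
        ≤ ∑' k : ℕ, 2 * (|α| ^ (k + 1) *
            (((2 * (l + 1) + 2 * j - 1).choose (2 * j - 1) : ℕ) : ℝ)
          / ((((k:ℝ) + 1) * R) ^ (2 * (l + 1) + 2 * j))) := by
      intro l
      have hrow := hrows l
      have hrow' : Summable (fun k : ℕ => |α| ^ (k + 1) *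
          (((2 * (l + 1) + 2 * j - 1).choose (2 * j - 1) : ℕ) : ℝ)
          / ((((k:ℝ) + 1) * R) ^ (2 * (l + 1) + 2 * j))) := by
        exact (hrow.mul_left 2⁻¹).congr fun k => by simp only [Function.uncurry_apply_pair]; ring
      have hnorm : Summable (fun k : ℕ => ‖(-α) ^ (k + 1) *
          (((2 * (l + 1) + 2 * j - 1).choose (2 * j - 1) : ℕ) : ℝ)
          / ((((k:ℝ) + 1) * R) ^ (2 * (l + 1) + 2 * j))‖) :=
        hrow'.congr fun k => by rw [Real.norm_eq_abs, habs l k]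
      have h := norm_tsum_le_tsum_norm hnorm
      rw [Real.norm_eq_abs] at h
      calc 2 * |∑' k : ℕ, (-α) ^ (k + 1) *
            (((2 * (l + 1) + 2 * j - 1).choose (2 * j - 1) : ℕ) : ℝ)
          / ((((k:ℝ) + 1) * R) ^ (2 * (l + 1) + 2 * j))|
          ≤ 2 * ∑' k : ℕ, ‖(-α) ^ (k + 1) *
            (((2 * (l + 1) + 2 * j - 1).choose (2 * j - 1) : ℕ) : ℝ)
          / ((((k:ℝ) + 1) * R) ^ (2 * (l + 1) + 2 * j))‖ := by linarith
        _ = _ := by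
          rw [← tsum_mul_left]
          exact tsum_congr fun k => by rw [Real.norm_eq_abs, habs l k]
    have hLHS : Summable (fun l : ℕ =>
        2 * |∑' k : ℕ, (-α) ^ (k + 1) *
            (((2 * (l + 1) + 2 * j - 1).choose (2 * j - 1) : ℕ) : ℝ)
          / ((((k:ℝ) + 1) * R) ^ (2 * (l + 1) + 2 * j))|) :=
      Summable.of_nonneg_of_le (fun l => by positivity) hstep hsums
    calc (∑' l : ℕ, 2 * |∑' k : ℕ, (-α) ^ (k + 1) *
            (((2 * (l + 1) + 2 * j - 1).choose (2 * j - 1) : ℕ) : ℝ)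
          / ((((k:ℝ) + 1) * R) ^ (2 * (l + 1) + 2 * j))|)
        ≤ ∑' l : ℕ, ∑' k : ℕ, 2 * (|α| ^ (k + 1) *
            (((2 * (l + 1) + 2 * j - 1).choose (2 * j - 1) : ℕ) : ℝ)
          / ((((k:ℝ) + 1) * R) ^ (2 * (l + 1) + 2 * j))) :=
          Summable.tsum_le_tsum hstep hLHS hsums
      _ = ∑' k : ℕ, ∑' l : ℕ, 2 * (|α| ^ (k + 1) *
            (((2 * (l + 1) + 2 * j - 1).choose (2 * j - 1) : ℕ) : ℝ)
          / ((((k:ℝ) + 1) * R) ^ (2 * (l + 1) + 2 * j))) := (Summable.tsum_comm hF).symm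
      _ = _ := by
          refine tsum_congr fun k => ?_
          have hterm : ∀ l : ℕ, 2 * (|α| ^ (k + 1) *
              (((2 * (l + 1) + 2 * j - 1).choose (2 * j - 1) : ℕ) : ℝ)
            / ((((k:ℝ) + 1) * R) ^ (2 * (l + 1) + 2 * j)))
            = |α| ^ (k + 1) * (2 *
              (((2 * (l + 1) + 2 * j - 1).choose (2 * j - 1) : ℕ) : ℝ)
              * (((((k:ℝ) + 1) * R)⁻¹)) ^ (2 * (l + 1) + 2 * j)) := by
            intro l
            rw [div_eq_mul_inv, ← inv_pow]
            ring
          rw [tsum_congr hterm, tsum_mul_left, key_tsum j hj _ (hb2 k)]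
  · -- second inequality
    have hFkpos : ∀ n : ℕ, (0:ℝ) < ((n:ℝ) + 1) * R - 1 := fun n => by linarith [hb2 n]
    have htle : ∀ k : ℕ, |α| ^ (k + 1) *
        ((((k:ℝ) + 1) * R - 1)⁻¹ ^ (2 * j) + (((k:ℝ) + 1) * R + 1)⁻¹ ^ (2 * j) -
          2 * ((((k:ℝ) + 1) * R)⁻¹) ^ (2 * j))
        ≤ (((k:ℝ) + 1) * R - 1)⁻¹ ^ (2 * j) - ((((k+1:ℕ):ℝ) + 1) * R - 1)⁻¹ ^ (2 * j) := by
      intro k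
      have h1 : |α| ^ (k + 1) ≤ 1 := pow_le_one₀ hα0 hα.le
      have hs := hs0 k
      have hA : |α| ^ (k + 1) *
          ((((k:ℝ) + 1) * R - 1)⁻¹ ^ (2 * j) + (((k:ℝ) + 1) * R + 1)⁻¹ ^ (2 * j) -
            2 * ((((k:ℝ) + 1) * R)⁻¹) ^ (2 * j))
          ≤ ((((k:ℝ) + 1) * R - 1)⁻¹ ^ (2 * j) + (((k:ℝ) + 1) * R + 1)⁻¹ ^ (2 * j) -
            2 * ((((k:ℝ) + 1) * R)⁻¹) ^ (2 * j)) := mul_le_of_le_one_left hs h1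
      have hB : (((k:ℝ) + 1) * R + 1)⁻¹ ^ (2 * j) ≤ ((((k:ℝ) + 1) * R)⁻¹) ^ (2 * j) := by
        apply pow_le_pow_left₀ (by positivity)
        exact inv_anti₀ (hbpos k) (by linarith)
      have hC : ((((k+1:ℕ):ℝ) + 1) * R - 1)⁻¹ ^ (2 * j)
          ≤ ((((k:ℝ) + 1) * R)⁻¹) ^ (2 * j) := by
        apply pow_le_pow_left₀ (inv_nonneg.2 (hFkpos (k+1)).le)
        apply inv_anti₀ (hbpos k)
        have : (((k+1:ℕ):ℝ) + 1) * R - 1 - ((k:ℝ) + 1) * R = R - 1 := by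
          push_cast; ring
        linarith
      linarith
    have htnn : ∀ k : ℕ, 0 ≤ |α| ^ (k + 1) *
        ((((k:ℝ) + 1) * R - 1)⁻¹ ^ (2 * j) + (((k:ℝ) + 1) * R + 1)⁻¹ ^ (2 * j) -
          2 * ((((k:ℝ) + 1) * R)⁻¹) ^ (2 * j)) :=
      fun k => mul_nonneg (by positivity) (hs0 k)
    have hpartial : ∀ n : ℕ, (∑ k ∈ Finset.range n, |α| ^ (k + 1) *
        ((((k:ℝ) + 1) * R - 1)⁻¹ ^ (2 * j) + (((k:ℝ) + 1) * R + 1)⁻¹ ^ (2 * j) -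
          2 * ((((k:ℝ) + 1) * R)⁻¹) ^ (2 * j)))
        ≤ ((((0:ℕ):ℝ) + 1) * R - 1)⁻¹ ^ (2 * j) := by
      intro n
      calc (∑ k ∈ Finset.range n, |α| ^ (k + 1) *
          ((((k:ℝ) + 1) * R - 1)⁻¹ ^ (2 * j) + (((k:ℝ) + 1) * R + 1)⁻¹ ^ (2 * j) -
            2 * ((((k:ℝ) + 1) * R)⁻¹) ^ (2 * j)))
          ≤ ∑ k ∈ Finset.range n, ((((k:ℝ) + 1) * R - 1)⁻¹ ^ (2 * j)
            - ((((k+1:ℕ):ℝ) + 1) * R - 1)⁻¹ ^ (2 * j)) :=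
          Finset.sum_le_sum fun k _ => htle k
        _ = ((((0:ℕ):ℝ) + 1) * R - 1)⁻¹ ^ (2 * j)
            - ((((n:ℕ):ℝ) + 1) * R - 1)⁻¹ ^ (2 * j) :=
          Finset.sum_range_sub' (fun k : ℕ => (((k:ℝ) + 1) * R - 1)⁻¹ ^ (2 * j)) n
        _ ≤ _ := by
          have := hFkpos n
          have : (0:ℝ) ≤ ((((n:ℕ):ℝ) + 1) * R - 1)⁻¹ ^ (2 * j) := by positivity
          linarith
    have hle := Real.tsum_le_of_sum_range_le htnn hpartial
    calc (∑' k : ℕ, |α| ^ (k + 1) *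
        ((((k:ℝ) + 1) * R - 1)⁻¹ ^ (2 * j) + (((k:ℝ) + 1) * R + 1)⁻¹ ^ (2 * j) -
          2 * ((((k:ℝ) + 1) * R)⁻¹) ^ (2 * j)))
        ≤ ((((0:ℕ):ℝ) + 1) * R - 1)⁻¹ ^ (2 * j) := hle
      _ < 1 := by
        have h1 : (1:ℝ) < (((0:ℕ):ℝ) + 1) * R - 1 := by push_cast; linarith
        have h2 : ((((0:ℕ):ℝ) + 1) * R - 1)⁻¹ < 1 := by
          rw [inv_lt_one_iff₀]; right; exact h1
        exact pow_lt_one₀ (by positivity) h2 (by omega)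
end

section
/- Let N ≥ 1 and let Q be a real N×N matrix that is strictly diagonally dominant by columns with uniform gap c > 0, i.e., for every column j, |Q_{jj}| - ∑_{i ≠ j} |Q_{ij}| ≥ c. Then Q is invertible and the operator norm of Q^{-1} as a map from (ℝ^N, ℓ^1-norm) to itself satisfies ‖Q^{-1}‖_{ℓ^1→ℓ^1} ≤ 1/c. -/
lemma varah_key (N : ℕ) (Q : Matrix (Fin N) (Fin N) ℝ) (c : ℝ)
    (hdom : ∀ j, c ≤ |Q j j| - ∑ i ∈ Finset.univ.erase j, |Q i j|) :
    ∀ y : Fin N → ℝ, c * ∑ j, |y j| ≤ ∑ i, |Matrix.mulVec Q y i| := by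
  intro y
  have h1 : ∀ i, |Q i i * y i| - ∑ j ∈ Finset.univ.erase i, |Q i j * y j|
      ≤ |Matrix.mulVec Q y i| := by
    intro i
    have hdecomp : Matrix.mulVec Q y i
        = Q i i * y i + ∑ j ∈ Finset.univ.erase i, Q i j * y j := by
      rw [Matrix.mulVec, dotProduct]
      rw [← Finset.add_sum_erase _ _ (Finset.mem_univ i)]
    rw [hdecomp]
    have := abs_add_le (Q i i * y i + ∑ j ∈ Finset.univ.erase i, Q i j * y j)
        (-(∑ j ∈ Finset.univ.erase i, Q i j * y j))
    simp only [add_neg_cancel_right, abs_neg] at this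
    have h2 : |∑ j ∈ Finset.univ.erase i, Q i j * y j|
        ≤ ∑ j ∈ Finset.univ.erase i, |Q i j * y j| := Finset.abs_sum_le_sum_abs _ _
    linarith
  calc c * ∑ j, |y j| = ∑ j, c * |y j| := by rw [Finset.mul_sum]
    _ ≤ ∑ j, (|Q j j| - ∑ i ∈ Finset.univ.erase j, |Q i j|) * |y j| := by
        apply Finset.sum_le_sum
        intro j _
        exact mul_le_mul_of_nonneg_right (hdom j) (abs_nonneg _)
    _ = ∑ i, (|Q i i * y i| - ∑ j ∈ Finset.univ.erase i, |Q i j * y j|) := by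
        simp only [sub_mul, Finset.sum_mul, abs_mul]
        rw [Finset.sum_sub_distrib, Finset.sum_sub_distrib]
        congr 1
        rw [Finset.sum_comm' (s := Finset.univ) (t := fun j => Finset.univ.erase j)
          (t' := Finset.univ) (s' := fun i => Finset.univ.erase i)]
        intro i j
        simp [Finset.mem_erase, eq_comm, and_comm]
    _ ≤ ∑ i, |Matrix.mulVec Q y i| := Finset.sum_le_sum fun i _ => h1 i

/-- Varah's bound: a real `N×N` matrix strictly diagonally dominant by columns with gap `c > 0`
is invertible and `‖Q⁻¹‖_{ℓ¹→ℓ¹} ≤ 1/c`. -/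
theorem stmt_9 (N : ℕ) (hN : 1 ≤ N) (Q : Matrix (Fin N) (Fin N) ℝ) (c : ℝ) (hc : 0 < c)
    (hdom : ∀ j, c ≤ |Q j j| - ∑ i ∈ Finset.univ.erase j, |Q i j|) :
    IsUnit Q.det ∧
      ∀ x : Fin N → ℝ, ∑ i, |Matrix.mulVec Q⁻¹ x i| ≤ (1 / c) * ∑ i, |x i| := by
  have key := varah_key N Q c hdom
  have hinj : Function.Injective (Q.mulVec) := by
    intro y z h
    have h0 : Q.mulVec (y - z) = 0 := by
      rw [Matrix.mulVec_sub, h, sub_self]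
    have := key (y - z)
    rw [h0] at this
    simp only [Pi.zero_apply, abs_zero, Finset.sum_const_zero] at this
    have hsum : ∑ j, |(y - z) j| ≤ 0 := by
      by_contra hcon
      push_neg at hcon
      nlinarith
    have hz : ∀ j, |(y - z) j| = 0 := by
      intro j
      have hn : (0:ℝ) ≤ ∑ j, |(y - z) j| :=
        Finset.sum_nonneg fun j _ => abs_nonneg _
      have heq : ∑ j, |(y - z) j| = 0 := le_antisymm hsum hn
      have := (Finset.sum_eq_zero_iff_of_nonneg
        (fun j (_ : j ∈ (Finset.univ : Finset (Fin N))) => abs_nonneg ((y-z) j))).mp heq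
      exact this j (Finset.mem_univ j)
    funext j
    have := hz j
    simp only [Pi.sub_apply, abs_eq_zero, sub_eq_zero] at this
    exact this
  have hunit : IsUnit Q := Matrix.mulVec_injective_iff_isUnit.mp hinj
  have hdet : IsUnit Q.det := (Matrix.isUnit_iff_isUnit_det Q).mp hunit
  refine ⟨hdet, fun x => ?_⟩
  have hQx : Q.mulVec (Q⁻¹.mulVec x) = x := by
    rw [Matrix.mulVec_mulVec, Matrix.mul_nonsing_inv Q hdet, Matrix.one_mulVec]
  have := key (Q⁻¹.mulVec x)
  rw [hQx] at this
  rw [one_div_mul_eq_div]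
  exact (le_div_iff₀ hc).mpr (by linarith)
end

section
/- For each integer k ≠ 0 define X_k : ℂ \ {0, i/(-k)} → ℂ by X_k(z) = i/(i/z + k) = i z/(i + k z). Then for every z in the closed region {|z| ≤ 1, |z - i| ≥ 1, |z + i| ≥ 1} (minus poles) one has |kz + i| ≥ 1, and for every integer j ≥ 1 there is a constant C_j independent of k such that the j-th complex derivative satisfies |X_k^{(j)}(z)| ≤ C_j |k|^{j-1} for |kz+i| ≥ 1. In particular X_k maps this region into the closed disc of radius 2/|k| centered at (0, 1/k) along the imaginary axis: X_k(z) = (1/k)(Re(1/(kz+i)) + i(1 + Im(1/(kz+i)))) with |1/(kz+i)| ≤ 1. -/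
open Complex

lemma affine_hasDerivAt (k : ℤ) (z : ℂ) :
    HasDerivAt (fun w : ℂ => Complex.I + (k : ℂ) * w) (k : ℂ) z := by
  simpa using ((hasDerivAt_id z).const_mul (k : ℂ)).const_add Complex.I

lemma deriv_formula (k : ℤ) (j : ℕ) (hj : 1 ≤ j) :
    ∀ z : ℂ, Complex.I + (k : ℂ) * z ≠ 0 →
      iteratedDeriv j (fun w : ℂ => Complex.I * w / (Complex.I + (k : ℂ) * w)) z
        = (-1) ^ j * (j.factorial : ℂ) * (k : ℂ) ^ (j - 1)
            * (Complex.I + (k : ℂ) * z) ^ (-(j : ℤ) - 1) := by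
  induction j, hj using Nat.le_induction with
  | base =>
    intro z hz
    rw [iteratedDeriv_one]
    have hnum : HasDerivAt (fun w : ℂ => Complex.I * w) Complex.I z := by
      simpa using (hasDerivAt_id z).const_mul Complex.I
    have h : HasDerivAt (fun w : ℂ => Complex.I * w / (Complex.I + (k : ℂ) * w)) _ z :=
      hnum.div (affine_hasDerivAt k z) hz
    rw [h.deriv]
    have e1 : Complex.I * (Complex.I + (k:ℂ) * z) - Complex.I * z * (k:ℂ) = -1 := by
      linear_combination Complex.I_mul_I
    rw [e1, show (-((1:ℕ):ℤ) - 1) = -2 by norm_num, zpow_neg,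
      show ((Complex.I + (k:ℂ)*z) ^ (2:ℤ)) = (Complex.I + (k:ℂ)*z) ^ (2:ℕ) from zpow_natCast _ 2]
    norm_num
    rw [neg_div, div_eq_mul_inv, one_mul]
  | succ j hj IH =>
    intro z hz
    rw [iteratedDeriv_succ]
    have hU : IsOpen {w : ℂ | Complex.I + (k : ℂ) * w ≠ 0} := by
      have : Continuous fun w : ℂ => Complex.I + (k : ℂ) * w := by continuity
      exact isOpen_ne.preimage this
    have hev : iteratedDeriv j (fun w : ℂ => Complex.I * w / (Complex.I + (k : ℂ) * w))
        =ᶠ[nhds z] fun w => (-1) ^ j * (j.factorial : ℂ) * (k : ℂ) ^ (j - 1)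
            * (Complex.I + (k : ℂ) * w) ^ (-(j : ℤ) - 1) :=
      Filter.eventuallyEq_of_mem (hU.mem_nhds hz) (fun w hw => IH w hw)
    rw [hev.deriv_eq]
    have hzp : HasDerivAt (fun w : ℂ => (Complex.I + (k : ℂ) * w) ^ (-(j : ℤ) - 1))
        (((-(j : ℤ) - 1 : ℤ) : ℂ) * (Complex.I + (k : ℂ) * z) ^ (-(j : ℤ) - 1 - 1) * (k : ℂ)) z := by
      have := (hasDerivAt_zpow (-(j : ℤ) - 1) (Complex.I + (k : ℂ) * z) (Or.inl hz)).comp z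
        (affine_hasDerivAt k z)
      exact this
    rw [(hzp.const_mul ((-1) ^ j * (j.factorial : ℂ) * (k : ℂ) ^ (j - 1))).deriv]
    have hpow : (k : ℂ) ^ (j - 1) * (k : ℂ) = (k : ℂ) ^ j := by
      rw [← pow_succ, Nat.sub_add_cancel hj]
    have hexp : (-(j : ℤ) - 1 - 1) = (-((j:ℤ)+1) - 1) := by ring
    have hj1 : j + 1 - 1 = j := rfl
    rw [hj1, hexp]
    push_cast [Nat.factorial_succ]
    rw [← hpow]
    ring

lemma part1 (k : ℤ) (hk : k ≠ 0) (z : ℂ) (h0 : ‖z‖ ≤ 1)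
    (h1 : 1 ≤ ‖z - Complex.I‖) (h2 : 1 ≤ ‖z + Complex.I‖) :
    1 ≤ ‖(k : ℂ) * z + Complex.I‖ := by
  have n0 : Complex.normSq z ≤ 1 := by
    nlinarith [Complex.sq_norm z, norm_nonneg z]
  have n1 : 1 ≤ Complex.normSq (z - Complex.I) := by
    nlinarith [Complex.sq_norm (z - Complex.I), norm_nonneg (z - Complex.I)]
  have n2 : 1 ≤ Complex.normSq (z + Complex.I) := by
    nlinarith [Complex.sq_norm (z + Complex.I), norm_nonneg (z + Complex.I)]
  have key : 1 ≤ Complex.normSq ((k : ℂ) * z + Complex.I) := by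
    simp only [Complex.normSq_apply, Complex.add_re, Complex.add_im, Complex.sub_re,
      Complex.sub_im, Complex.mul_re, Complex.mul_im, Complex.I_re, Complex.I_im,
      Complex.intCast_re, Complex.intCast_im] at *
    set x := z.re; set y := z.im
    have hk' : (1 : ℝ) ≤ (k : ℝ) ∨ (k : ℝ) ≤ -1 := by
      rcases lt_or_gt_of_ne hk with h | h
      · right; exact_mod_cast Int.le_of_lt_add_one (by omega : k < -1 + 1) |>.trans (le_refl _) |>.trans_eq rfl
      · left; exact_mod_cast h
    rcases hk' with h | h
    · nlinarith [mul_nonneg (by linarith : (0:ℝ) ≤ (k:ℝ)) (by nlinarith : 0 ≤ x^2 + y^2 + 2*y),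
        mul_nonneg (mul_nonneg (by linarith : (0:ℝ) ≤ (k:ℝ)) (by linarith : (0:ℝ) ≤ (k:ℝ) - 1)) (by nlinarith : 0 ≤ x^2 + y^2)]
    · nlinarith [mul_nonneg (by linarith : (0:ℝ) ≤ -(k:ℝ)) (by nlinarith : 0 ≤ x^2 + y^2 - 2*y),
        mul_nonneg (mul_nonneg (by linarith : (0:ℝ) ≤ -(k:ℝ)) (by linarith : (0:ℝ) ≤ -(k:ℝ) - 1)) (by nlinarith : 0 ≤ x^2 + y^2)]
  nlinarith [Complex.sq_norm ((k : ℂ) * z + Complex.I), norm_nonneg ((k : ℂ) * z + Complex.I)]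

/-- For `k ≠ 0` let `X_k(z) = iz/(i+kz)`. On the region
`{|z| ≤ 1, |z-i| ≥ 1, |z+i| ≥ 1}` one has `|kz+i| ≥ 1` and
`|X_k(z) - i/k| ≤ 2/|k|` (so `X_k` maps the region into a disc of radius `2/|k|`), and for
every `j ≥ 1` there is `C_j` independent of `k` with `|X_k^{(j)}(z)| ≤ C_j |k|^{j-1}`. -/
theorem stmt_19 :
    (∀ k : ℤ, k ≠ 0 → ∀ z : ℂ, ‖z‖ ≤ 1 → 1 ≤ ‖z - Complex.I‖ →
      1 ≤ ‖z + Complex.I‖ →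
      1 ≤ ‖(k : ℂ) * z + Complex.I‖ ∧
      ‖Complex.I * z / (Complex.I + (k : ℂ) * z) - Complex.I / (k : ℂ)‖
        ≤ 2 / |(k : ℝ)|) ∧
    ∀ j : ℕ, 1 ≤ j → ∃ C : ℝ, ∀ k : ℤ, k ≠ 0 → ∀ z : ℂ, ‖z‖ ≤ 1 →
      1 ≤ ‖z - Complex.I‖ → 1 ≤ ‖z + Complex.I‖ →
      ‖iteratedDeriv j (fun w : ℂ => Complex.I * w / (Complex.I + (k : ℂ) * w)) z‖
        ≤ C * |(k : ℝ)| ^ (j - 1) := by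
  constructor
  · intro k hk z h0 h1 h2
    have hge := part1 k hk z h0 h1 h2
    refine ⟨hge, ?_⟩
    have hz : Complex.I + (k : ℂ) * z ≠ 0 := by
      intro h
      rw [show (k : ℂ) * z + Complex.I = Complex.I + (k : ℂ) * z by ring, h] at hge
      simp at hge
      linarith
    have hk0 : (k : ℂ) ≠ 0 := Int.cast_ne_zero.mpr hk
    have hkR : (0:ℝ) < |(k : ℝ)| := by
      simp [abs_pos, hk]
    have e : Complex.I * z / (Complex.I + (k : ℂ) * z) - Complex.I / (k : ℂ)
        = ((k : ℂ) * (Complex.I + (k : ℂ) * z))⁻¹ := by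
      rw [div_sub_div _ _ hz hk0, inv_eq_one_div,
        div_eq_div_iff (mul_ne_zero hz hk0) (mul_ne_zero hk0 hz)]
      linear_combination (-((k:ℂ) * (Complex.I + (k:ℂ)*z))) * Complex.I_mul_I
    rw [e, norm_inv, norm_mul, Complex.norm_intCast]
    rw [show (k : ℂ) * z + Complex.I = Complex.I + (k : ℂ) * z by ring] at hge
    have hstep : (|(k:ℝ)| * ‖Complex.I + (k : ℂ) * z‖)⁻¹ ≤ |(k:ℝ)|⁻¹ := by
      rw [inv_le_inv₀ (by positivity) hkR]
      exact le_mul_of_one_le_right hkR.le hge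
    refine hstep.trans ?_
    rw [div_eq_mul_inv]
    have : (0:ℝ) ≤ |(k:ℝ)|⁻¹ := by positivity
    linarith
  · intro j hj
    refine ⟨(j.factorial : ℝ), ?_⟩
    intro k hk z h0 h1 h2
    have hge := part1 k hk z h0 h1 h2
    rw [show (k : ℂ) * z + Complex.I = Complex.I + (k : ℂ) * z by ring] at hge
    have hz : Complex.I + (k : ℂ) * z ≠ 0 := by
      intro h; rw [h] at hge; simp at hge; linarith
    rw [deriv_formula k j hj z hz]
    have habs : ‖(-1) ^ j * (j.factorial : ℂ) * (k : ℂ) ^ (j - 1)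
          * (Complex.I + (k : ℂ) * z) ^ (-(j : ℤ) - 1)‖
        = (j.factorial : ℝ) * |(k:ℝ)| ^ (j-1)
          * ‖Complex.I + (k : ℂ) * z‖ ^ (-(j:ℤ) - 1) := by
      rw [norm_mul, norm_mul, norm_mul, norm_pow, norm_pow, norm_zpow]
      simp [Complex.norm_intCast]
    rw [habs]
    have h1' : ‖Complex.I + (k : ℂ) * z‖ ^ (-(j:ℤ) - 1) ≤ 1 :=
      zpow_le_one_of_nonpos₀ hge (by omega)
    have hC : (0:ℝ) ≤ (j.factorial : ℝ) * |(k:ℝ)| ^ (j-1) := by positivity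
    calc (j.factorial : ℝ) * |(k:ℝ)| ^ (j-1) * ‖Complex.I + (k : ℂ) * z‖ ^ (-(j:ℤ) - 1)
        ≤ (j.factorial : ℝ) * |(k:ℝ)| ^ (j-1) * 1 := by
          exact mul_le_mul_of_nonneg_left h1' hC
      _ = (j.factorial : ℝ) * |(k:ℝ)| ^ (j-1) := by ring
end
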